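/- arXiv:2205.13984 — 2 statements merged into one kernel-verified Lean document; each statement's English description precedes it below -/
import Mathlib

section
/- On each leaf of the determinant foliation of the parameter space, every f-divergence between Poincaré distributions is symmetric: if θ₁ and θ₂ are real 2×2 symmetric positive-definite matrices with det θ₁ = det θ₂, then for every convex f : (0,∞) → ℝ with f(1) = 0 one has D_f[p_{θ₁} : p_{θ₂}] = D_f[p_{θ₂} : p_{θ₁}]. -/
open MeasureTheory Matrix

/-- The Poincaré density on the upper half-plane, as a density on `ℝ × ℝ`
(vanishing for `y ≤ 0`), indexed by a 2×2 symmetric positive-definite matrix. -/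
noncomputable def poincareDensity (θ : Matrix (Fin 2) (Fin 2) ℝ) (z : ℝ × ℝ) : ℝ :=
  if 0 < z.2 then
    Real.sqrt θ.det * Real.exp (2 * Real.sqrt θ.det) / Real.pi *
      Real.exp (-(θ 0 0 * (z.1 ^ 2 + z.2 ^ 2) + 2 * θ 0 1 * z.1 + θ 1 1) / z.2) / z.2 ^ 2
  else 0

/-- The `f`-divergence between two densities on the upper half-plane. -/
noncomputable def fDivH (f : ℝ → ℝ) (p q : ℝ × ℝ → ℝ) : ℝ :=
  ∫ z in {w : ℝ × ℝ | 0 < w.2}, p z * f (q z / p z)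

/-!
With `Q_θ(z) = (z̄, 1) θ (z, 1)ᵀ`, the density of `p_θ` with respect to the `GL(2, ℝ)`-invariant
measure `dx dy / y²` on `ℍ` is `w_θ(z) = C(det θ) exp (-Q_θ(z) / Im z)`. For `det g > 0` one has
`Q_θ(g • z) / Im (g • z) = Q_{gᵀθg}(z) / (det g · Im z)`, hence `w_θ ∘ g = w_θ'` whenever
`gᵀθg = det g · θ'`. If `det θ₁ = det θ₂`, then `g = J (θ₁ + θ₂)`, with `J` the rotation by `π/2`,
satisfies `gᵀθ₁g = det g · θ₂` and `gᵀθ₂g = det g · θ₁`. So `g` swaps `w_{θ₁}` and `w_{θ₂}`, and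
the invariance of the measure under `g` turns `D_f[p_{θ₁} : p_{θ₂}]` into `D_f[p_{θ₂} : p_{θ₁}]`.
-/

open UpperHalfPlane

namespace UpperHalfPlane

theorem integral_eq_setIntegral_div_im_sq (F : ℂ → ℝ) :
    ∫ z : ℍ, F z = ∫ z in {z : ℂ | 0 < z.im}, F z / z.im ^ 2 := by
  have hmeas : Measurable fun z : ℍ ↦ (1 / NNReal.mk z.im z.im_pos.le) ^ 2 := by fun_prop
  have hsmul (z : ℍ) : (1 / NNReal.mk z.im z.im_pos.le) ^ 2 • F z = F z / (z : ℂ).im ^ 2 := by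
    simp [NNReal.smul_def, div_eq_inv_mul]
  rw [volume_def, integral_withDensity_eq_integral_smul hmeas]
  simp_rw [hsmul]
  rw [← measurableEmbedding_coe.integral_map (g := fun z : ℂ ↦ F z / z.im ^ 2),
    measurableEmbedding_coe.map_comap, range_coe]

end UpperHalfPlane

theorem setIntegral_snd_pos_eq_setIntegral_im_pos (F : ℝ × ℝ → ℝ) :
    ∫ w in {w : ℝ × ℝ | 0 < w.2}, F w = ∫ z in {z : ℂ | 0 < z.im}, F (z.re, z.im) :=
  (Complex.volume_preserving_equiv_real_prod.setIntegral_preimage_emb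
    Complex.measurableEquivRealProd.measurableEmbedding F _).symm

noncomputable def poincareForm (θ : Matrix (Fin 2) (Fin 2) ℝ) (z : ℂ) : ℝ :=
  θ 0 0 * Complex.normSq z + 2 * θ 0 1 * z.re + θ 1 1

noncomputable def poincareWeight (θ : Matrix (Fin 2) (Fin 2) ℝ) (z : ℂ) : ℝ :=
  √θ.det * Real.exp (2 * √θ.det) / Real.pi * Real.exp (-(poincareForm θ z / z.im))

theorem poincareForm_smul (c : ℝ) (θ : Matrix (Fin 2) (Fin 2) ℝ) (z : ℂ) :
    poincareForm (c • θ) z = c * poincareForm θ z := by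
  simp only [poincareForm, Matrix.smul_apply, smul_eq_mul]
  ring

theorem poincareForm_num_div_denom {θ : Matrix (Fin 2) (Fin 2) ℝ} (hθ : θ.IsSymm)
    (g : GL (Fin 2) ℝ) {z : ℂ} (hz : denom g z ≠ 0) :
    poincareForm θ (num g z / denom g z) =
      poincareForm ((g : Matrix (Fin 2) (Fin 2) ℝ)ᵀ * θ * g) z / Complex.normSq (denom g z) := by
  have hD : Complex.normSq (denom g z) ≠ 0 := (Complex.normSq_pos.mpr hz).ne'
  rw [eq_div_iff hD, poincareForm, poincareForm, Complex.normSq_div, Complex.div_re]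
  field_simp
  simp only [num, denom, Complex.normSq_apply, Complex.add_re, Complex.add_im, Complex.mul_re,
    Complex.mul_im, Complex.ofReal_re, Complex.ofReal_im, mul_apply, transpose_apply,
    Fin.sum_univ_two, hθ.apply 0 1]
  ring

theorem poincareForm_smul_div_im {θ : Matrix (Fin 2) (Fin 2) ℝ} (hθ : θ.IsSymm)
    {g : GL (Fin 2) ℝ} (hg : 0 < g.det.val) (z : ℍ) :
    poincareForm θ ↑(g • z) / (↑(g • z) : ℂ).im =
      poincareForm ((g : Matrix (Fin 2) (Fin 2) ℝ)ᵀ * θ * g) z / (g.det.val * (z : ℂ).im) := by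
  have hD : 0 < Complex.normSq (denom g z) := Complex.normSq_pos.mpr (denom_ne_zero g z)
  rw [coe_im, coe_im, coe_smul_of_det_pos hg, poincareForm_num_div_denom hθ g (denom_ne_zero g z),
    im_smul_eq_div_normSq, abs_of_pos hg]
  field_simp

theorem poincareWeight_smul {θ θ' : Matrix (Fin 2) (Fin 2) ℝ} (hθ : θ.IsSymm)
    {g : GL (Fin 2) ℝ} (hg : 0 < g.det.val)
    (h : (g : Matrix (Fin 2) (Fin 2) ℝ)ᵀ * θ * g = g.det.val • θ') (z : ℍ) :
    poincareWeight θ ↑(g • z) = poincareWeight θ' z := by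
  have hdet : θ.det = θ'.det := by
    have := congrArg det h
    rw [det_mul, det_mul, det_transpose, det_smul, Fintype.card_fin,
      ← GeneralLinearGroup.val_det_apply] at this
    exact mul_left_cancel₀ (pow_ne_zero 2 hg.ne') (by linear_combination this)
  rw [poincareWeight, poincareWeight, poincareForm_smul_div_im hθ hg, h, poincareForm_smul,
    mul_div_mul_left _ _ hg.ne', hdet]

theorem poincareDensity_eq_poincareWeight_div (θ : Matrix (Fin 2) (Fin 2) ℝ) {z : ℂ}
    (hz : 0 < z.im) : poincareDensity θ (z.re, z.im) = poincareWeight θ z / z.im ^ 2 := by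
  rw [poincareDensity, if_pos hz, poincareWeight, poincareForm, Complex.normSq_apply, neg_div]
  ring_nf

theorem fDivH_poincareDensity (f : ℝ → ℝ) (θ θ' : Matrix (Fin 2) (Fin 2) ℝ) :
    fDivH f (poincareDensity θ) (poincareDensity θ') =
      ∫ z : ℍ, poincareWeight θ z * f (poincareWeight θ' z / poincareWeight θ z) := by
  rw [fDivH, setIntegral_snd_pos_eq_setIntegral_im_pos, integral_eq_setIntegral_div_im_sq
    fun z ↦ poincareWeight θ z * f (poincareWeight θ' z / poincareWeight θ z)]
  refine setIntegral_congr_fun (measurableSet_lt measurable_const Complex.measurable_im) ?_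
  intro z (hz : 0 < z.im)
  dsimp only
  rw [poincareDensity_eq_poincareWeight_div θ hz, poincareDensity_eq_poincareWeight_div θ' hz,
    div_div_div_cancel_right₀ (pow_ne_zero 2 hz.ne'), div_mul_eq_mul_div]

theorem transpose_mul_mul_eq_det_smul {θ₁ θ₂ : Matrix (Fin 2) (Fin 2) ℝ} (h₁ : θ₁.IsSymm)
    (h₂ : θ₂.IsSymm) (hdet : θ₁.det = θ₂.det) :
    (!![0, -1; 1, 0] * (θ₁ + θ₂))ᵀ * θ₁ * (!![0, -1; 1, 0] * (θ₁ + θ₂)) =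
      (θ₁ + θ₂).det • θ₂ := by
  rw [det_fin_two, det_fin_two, h₁.apply 0 1, h₂.apply 0 1] at hdet
  ext i j
  fin_cases i <;> fin_cases j <;>
    simp only [cons_mul, vecMul, dotProduct, empty_mul, mul_apply, transpose_apply, of_apply,
      Equiv.symm_apply_apply, Matrix.add_apply, Fin.sum_univ_two, cons_val', cons_val_zero,
      cons_val_one, cons_val_fin_one, Fin.zero_eta, Fin.mk_one, h₁.apply 0 1, h₂.apply 0 1,
      det_fin_two, Matrix.smul_apply, smul_eq_mul]
  · linear_combination (θ₁ 0 0 + θ₂ 0 0) * hdet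
  · linear_combination (θ₁ 0 1 + θ₂ 0 1) * hdet
  · linear_combination (θ₁ 0 1 + θ₂ 0 1) * hdet
  · linear_combination (θ₁ 1 1 + θ₂ 1 1) * hdet

theorem exists_GL_swap_of_det_eq {θ₁ θ₂ : Matrix (Fin 2) (Fin 2) ℝ} (h₁ : θ₁.PosDef)
    (h₂ : θ₂.PosDef) (hdet : θ₁.det = θ₂.det) :
    ∃ g : GL (Fin 2) ℝ, 0 < g.det.val ∧
      (g : Matrix (Fin 2) (Fin 2) ℝ)ᵀ * θ₁ * g = g.det.val • θ₂ ∧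
      (g : Matrix (Fin 2) (Fin 2) ℝ)ᵀ * θ₂ * g = g.det.val • θ₁ := by
  have hs₁ : θ₁.IsSymm := isHermitian_iff_isSymm.mp h₁.isHermitian
  have hs₂ : θ₂.IsSymm := isHermitian_iff_isSymm.mp h₂.isHermitian
  have hS : 0 < (θ₁ + θ₂).det := (h₁.add h₂).det_pos
  have hdet_J : (!![0, -1; 1, 0] * (θ₁ + θ₂)).det = (θ₁ + θ₂).det := by
    rw [det_mul, det_fin_two_of]
    norm_num
  let g : GL (Fin 2) ℝ := .mkOfDetNeZero (!![0, -1; 1, 0] * (θ₁ + θ₂)) (hdet_J ▸ hS.ne')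
  have hg : g.det.val = (θ₁ + θ₂).det := by
    rw [GeneralLinearGroup.val_det_apply]
    exact hdet_J
  refine ⟨g, hg ▸ hS, ?_, ?_⟩
  · rw [hg]
    exact transpose_mul_mul_eq_det_smul hs₁ hs₂ hdet
  · have h₂₁ := transpose_mul_mul_eq_det_smul hs₂ hs₁ hdet.symm
    rw [add_comm θ₂] at h₂₁
    rw [hg]
    exact h₂₁

theorem fDiv_poincare_symmetric_on_leaf_general
    (θ₁ θ₂ : Matrix (Fin 2) (Fin 2) ℝ) (h₁ : θ₁.PosDef) (h₂ : θ₂.PosDef)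
    (hdet : θ₁.det = θ₂.det)
    (f : ℝ → ℝ) :
    fDivH f (poincareDensity θ₁) (poincareDensity θ₂) =
      fDivH f (poincareDensity θ₂) (poincareDensity θ₁) := by
  obtain ⟨g, hg, h₁₂, h₂₁⟩ := exists_GL_swap_of_det_eq h₁ h₂ hdet
  have hs₁ : θ₁.IsSymm := isHermitian_iff_isSymm.mp h₁.isHermitian
  have hs₂ : θ₂.IsSymm := isHermitian_iff_isSymm.mp h₂.isHermitian
  rw [fDivH_poincareDensity, fDivH_poincareDensity, ← integral_smul_eq_self _ (g := g)]
  simp_rw [poincareWeight_smul hs₁ hg h₁₂, poincareWeight_smul hs₂ hg h₂₁]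

/-- on each leaf of the determinant foliation (matrices of equal
determinant), every f-divergence between Poincaré distributions is symmetric. -/
theorem fDiv_poincare_symmetric_on_leaf
    (θ₁ θ₂ : Matrix (Fin 2) (Fin 2) ℝ) (h₁ : θ₁.PosDef) (h₂ : θ₂.PosDef)
    (hdet : θ₁.det = θ₂.det)
    (f : ℝ → ℝ) (hf : ConvexOn ℝ (Set.Ioi 0) f) (hf1 : f 1 = 0) :
    fDivH f (poincareDensity θ₁) (poincareDensity θ₂) =
      fDivH f (poincareDensity θ₂) (poincareDensity θ₁) :=
  fDiv_poincare_symmetric_on_leaf_general θ₁ θ₂ h₁ h₂ hdet f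
end

section
/- For α ∈ (0,1) and real 2×2 symmetric positive-definite matrices θ, θ′, the α-Bhattacharyya divergence between the Poincaré distributions p_θ and p_{θ′} has the closed form −log ∫_H p_θ(x,y)^α p_{θ′}(x,y)^{1−α} dx dy = (1/2)·log( det(αθ+(1−α)θ′) / ((det θ)^α (det θ′)^{1−α}) ) + 2( √(det(αθ+(1−α)θ′)) − (α√(det θ) + (1−α)√(det θ′)) ). -/
open MeasureTheory Matrix

/-!
The exponent of `p_θ` is linear in `θ`, so `p_θ ^ α * p_θ' ^ (1 - α)` is `Z θ ^ α * Z θ' ^ (1 - α)`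
times the unnormalised kernel of the mixture `α • θ + (1 - α) • θ'`, where
`Z θ = √(det θ) * exp (2 * √(det θ)) / π` is the normalising constant. Hence the integral equals
`Z θ ^ α * Z θ' ^ (1 - α) / Z (α • θ + (1 - α) • θ')`, and taking logarithms gives the formula.

That the kernel of `θ = [[a, b], [b, c]]` integrates to `1 / Z θ` is checked directly: completing
the square in `x` leaves a Gaussian integral, and what remains is
`∫ y in (0, ∞), y ^ (-3/2) * exp (-(p * y + q / y)) = √(π / q) * exp (-2 * √(p * q))`.
This follows from the Cauchy–Schlömilch substitution `u = √(p * y) - √(q / y)`, which maps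
`(0, ∞)` onto `ℝ` with `u ^ 2 = p * y + q / y - 2 * √(p * q)`, together with the inversion
`y ↦ q / (p * y)`, which shows that the two halves of `du / dy` contribute equally.
-/

open Real Set

lemma integral_Ioi_comp_div {E : Type*} [NormedAddCommGroup E] [NormedSpace ℝ E] (g : ℝ → E)
    {c : ℝ} (hc : 0 < c) :
    ∫ y in Ioi 0, (c / y ^ 2) • g (c / y) = ∫ y in Ioi 0, g y := by
  have himage : (c / ·) '' Ioi (0 : ℝ) = Ioi 0 := by
    ext z
    refine ⟨fun ⟨y, hy, hz⟩ => hz ▸ div_pos hc hy, fun hz => ⟨c / z, div_pos hc hz, ?_⟩⟩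
    exact div_div_cancel₀ hc.ne'
  have hinj : InjOn (c / ·) (Ioi (0 : ℝ)) := fun y₁ _ y₂ _ h => by
    simpa [div_eq_mul_inv, hc.ne'] using h
  have hderiv : ∀ y ∈ Ioi (0 : ℝ), HasDerivWithinAt (c / ·) (-(c / y ^ 2)) (Ioi 0) y := by
    intro y hy
    refine HasDerivAt.hasDerivWithinAt
      (((hasDerivAt_const y c).div (hasDerivAt_id y) (ne_of_gt hy)).congr_deriv ?_)
    simp [neg_div]
  conv_rhs => rw [← himage, integral_image_eq_integral_abs_deriv_smul measurableSet_Ioi hderiv hinj]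
  refine setIntegral_congr_fun measurableSet_Ioi fun y hy => ?_
  rw [abs_neg, abs_of_pos (div_pos hc (pow_pos hy 2))]

section CauchySchlomilch

variable {p q y : ℝ}

noncomputable def cauchySchlomilch (p q y : ℝ) : ℝ := √p * √y - √q / √y

lemma hasDerivAt_cauchySchlomilch (hy : 0 < y) :
    HasDerivAt (cauchySchlomilch p q) (√p / (2 * √y) + √q / (2 * (y * √y))) y := by
  have hsqrt := hasDerivAt_sqrt hy.ne'
  refine ((hsqrt.const_mul √p).sub
    ((hasDerivAt_const y √q).div hsqrt (sqrt_pos.2 hy).ne')).congr_deriv ?_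
  rw [sq_sqrt hy.le]
  field_simp
  ring

lemma strictMonoOn_cauchySchlomilch (hp : 0 < p) :
    StrictMonoOn (cauchySchlomilch p q) (Ioi 0) := by
  intro y₁ hy₁ y₂ _ hlt
  have hs : √y₁ < √y₂ := sqrt_lt_sqrt (le_of_lt hy₁) hlt
  have : √q / √y₂ ≤ √q / √y₁ :=
    div_le_div_of_nonneg_left (sqrt_nonneg q) (sqrt_pos.2 hy₁) hs.le
  have : √p * √y₁ < √p * √y₂ := mul_lt_mul_of_pos_left hs (sqrt_pos.2 hp)
  unfold cauchySchlomilch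
  linarith

lemma image_cauchySchlomilch (hp : 0 < p) (hq : 0 < q) :
    cauchySchlomilch p q '' Ioi 0 = univ := by
  refine eq_univ_of_forall fun u => ?_
  have hsp := sqrt_pos.2 hp
  have hsq := sqrt_pos.2 hq
  set s := √(u ^ 2 + 4 * √p * √q)
  have hs : s ^ 2 = u ^ 2 + 4 * √p * √q := sq_sqrt (by positivity)
  have hu : |u| < s := by
    rw [← sqrt_sq_eq_abs]
    exact sqrt_lt_sqrt (sq_nonneg u) (by linarith [mul_pos hsp hsq])
  -- `√y` is the positive root `t` of `√p t² - u t - √q`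
  obtain ⟨t, h2t⟩ : ∃ t, 2 * √p * t = u + s := ⟨(u + s) / (2 * √p), by field_simp⟩
  have ht : 0 < t := by
    have : 0 < 2 * √p * t := by rw [h2t]; linarith [neg_abs_le u]
    exact pos_of_mul_pos_right this (by positivity)
  refine ⟨t ^ 2, pow_pos ht 2, ?_⟩
  rw [cauchySchlomilch, sqrt_sq ht.le]
  field_simp
  refine mul_left_cancel₀ (by positivity : 4 * √p ≠ 0) ?_
  linear_combination (2 * √p * t + s - u) * h2t + hs

lemma cauchySchlomilch_sq (hp : 0 ≤ p) (hq : 0 ≤ q) (hy : 0 < y) :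
    cauchySchlomilch p q y ^ 2 = p * y + q / y - 2 * √(p * q) := by
  have hsy : √y ≠ 0 := (sqrt_pos.2 hy).ne'
  rw [cauchySchlomilch, sub_sq, mul_pow, div_pow, sq_sqrt hp, sq_sqrt hq, sq_sqrt hy.le,
    sqrt_mul hp]
  field_simp
  ring

lemma abs_deriv_mul_exp_neg_cauchySchlomilch_sq (hp : 0 ≤ p) (hq : 0 ≤ q) (hy : 0 < y) :
    |√p / (2 * √y) + √q / (2 * (y * √y))| * exp (-cauchySchlomilch p q y ^ 2) =
      exp (2 * √(p * q)) * ((√p / (2 * √y) + √q / (2 * (y * √y))) * exp (-(p * y + q / y))) := by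
  rw [abs_of_nonneg (by positivity), cauchySchlomilch_sq hp hq hy, neg_sub,
    sub_eq_add_neg, exp_add]
  ring

lemma integrableOn_deriv_cauchySchlomilch_mul_exp (hp : 0 < p) (hq : 0 < q) :
    IntegrableOn (fun y => (√p / (2 * √y) + √q / (2 * (y * √y))) * exp (-(p * y + q / y)))
      (Ioi 0) := by
  have h := (integrableOn_image_iff_integrableOn_abs_deriv_smul measurableSet_Ioi
    (fun y hy => (hasDerivAt_cauchySchlomilch hy).hasDerivWithinAt)
    (strictMonoOn_cauchySchlomilch (q := q) hp).injOn (fun u => exp (-u ^ 2))).1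
  rw [image_cauchySchlomilch hp hq, integrableOn_univ] at h
  refine IntegrableOn.congr_fun ((h (by simpa using integrable_exp_neg_mul_sq one_pos)).const_mul
    (exp (-(2 * √(p * q))))) (fun y hy => ?_) measurableSet_Ioi
  simp only [smul_eq_mul, abs_deriv_mul_exp_neg_cauchySchlomilch_sq hp.le hq.le hy]
  rw [← mul_assoc, ← exp_add]
  simp

lemma integral_deriv_cauchySchlomilch_mul_exp (hp : 0 < p) (hq : 0 < q) :
    ∫ y in Ioi 0, (√p / (2 * √y) + √q / (2 * (y * √y))) * exp (-(p * y + q / y)) =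
      √π * exp (-(2 * √(p * q))) := by
  have h := integral_image_eq_integral_abs_deriv_smul measurableSet_Ioi
    (fun y hy => (hasDerivAt_cauchySchlomilch hy).hasDerivWithinAt)
    (strictMonoOn_cauchySchlomilch (q := q) hp).injOn (fun u => exp (-u ^ 2))
  simp only [smul_eq_mul] at h
  rw [image_cauchySchlomilch hp hq, Measure.restrict_univ,
    setIntegral_congr_fun measurableSet_Ioi
      (fun y hy => abs_deriv_mul_exp_neg_cauchySchlomilch_sq hp.le hq.le hy),
    integral_const_mul] at h
  rw [exp_neg, eq_mul_inv_iff_mul_eq₀ (exp_pos _).ne', mul_comm, ← h]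
  simpa using integral_gaussian 1

lemma integral_exp_neg_mul_add_div_div_sqrt (hp : 0 < p) (hq : 0 < q) :
    ∫ y in Ioi 0, exp (-(p * y + q / y)) / √y =
      √(q / p) * ∫ y in Ioi 0, exp (-(p * y + q / y)) / (y * √y) := by
  have hc : 0 < q / p := div_pos hq hp
  rw [← integral_Ioi_comp_div _ hc, ← integral_const_mul]
  refine setIntegral_congr_fun measurableSet_Ioi fun y (hy : 0 < y) => ?_
  have harg : p * (q / p / y) + q / (q / p / y) = p * y + q / y := by field_simp; ring
  have : 0 < √y := sqrt_pos.2 hy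
  rw [smul_eq_mul, harg, sqrt_div' _ hy.le]
  field_simp
  rw [sq_sqrt hc.le, sq_sqrt hy.le]
  field_simp

lemma integrableOn_exp_neg_mul_add_div_div_sqrt (hp : 0 < p) (hq : 0 < q) :
    IntegrableOn (fun y => exp (-(p * y + q / y)) / √y) (Ioi 0) := by
  refine ((integrableOn_deriv_cauchySchlomilch_mul_exp hp hq).const_mul (2 / √p)).mono'
    (by fun_prop : Measurable _).aestronglyMeasurable ?_
  filter_upwards [ae_restrict_mem measurableSet_Ioi] with y (hy : 0 < y)
  have : 0 < √p := sqrt_pos.2 hp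
  rw [norm_of_nonneg (by positivity)]
  calc exp (-(p * y + q / y)) / √y = 2 / √p * (√p / (2 * √y) * exp (-(p * y + q / y))) := by
        field_simp
    _ ≤ _ := by gcongr; exact le_add_of_nonneg_right (by positivity)

lemma integrableOn_exp_neg_mul_add_div_div_mul_sqrt (hp : 0 < p) (hq : 0 < q) :
    IntegrableOn (fun y => exp (-(p * y + q / y)) / (y * √y)) (Ioi 0) := by
  refine ((integrableOn_deriv_cauchySchlomilch_mul_exp hp hq).const_mul (2 / √q)).mono'
    (by fun_prop : Measurable _).aestronglyMeasurable ?_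
  filter_upwards [ae_restrict_mem measurableSet_Ioi] with y (hy : 0 < y)
  have : 0 < √q := sqrt_pos.2 hq
  rw [norm_of_nonneg (by positivity)]
  calc exp (-(p * y + q / y)) / (y * √y) =
        2 / √q * (√q / (2 * (y * √y)) * exp (-(p * y + q / y))) := by
        field_simp
    _ ≤ _ := by gcongr; exact le_add_of_nonneg_left (by positivity)

lemma integral_exp_neg_mul_add_div_div_mul_sqrt (hp : 0 < p) (hq : 0 < q) :
    ∫ y in Ioi 0, exp (-(p * y + q / y)) / (y * √y) = √π / √q * exp (-(2 * √(p * q))) := by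
  have hsplit : ∫ y in Ioi 0, (√p / (2 * √y) + √q / (2 * (y * √y))) * exp (-(p * y + q / y)) =
      √p / 2 * (∫ y in Ioi 0, exp (-(p * y + q / y)) / √y) +
        √q / 2 * ∫ y in Ioi 0, exp (-(p * y + q / y)) / (y * √y) := by
    rw [← integral_const_mul, ← integral_const_mul, ← integral_add
      ((integrableOn_exp_neg_mul_add_div_div_sqrt hp hq).const_mul _)
      ((integrableOn_exp_neg_mul_add_div_div_mul_sqrt hp hq).const_mul _)]
    exact setIntegral_congr_fun measurableSet_Ioi fun y _ => by ring
  have h := integral_deriv_cauchySchlomilch_mul_exp hp hq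
  rw [hsplit, integral_exp_neg_mul_add_div_div_sqrt hp hq, sqrt_div' _ hp.le] at h
  have : 0 < √p := sqrt_pos.2 hp
  have : 0 < √q := sqrt_pos.2 hq
  field_simp at h ⊢
  linear_combination h / 2

end CauchySchlomilch

section UpperHalfPlane

variable {a b c y : ℝ}

lemma integral_exp_neg_mul_add_sq (s m : ℝ) :
    ∫ x, exp (-(s * (x + m) ^ 2)) = √(π / s) := by
  rw [integral_add_right_eq_self (fun x => exp (-(s * x ^ 2))) m]
  simpa [neg_mul] using integral_gaussian s

lemma exp_neg_quadratic_div_eq (ha : a ≠ 0) (hy : y ≠ 0) (x : ℝ) :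
    exp (-(a * (x ^ 2 + y ^ 2) + 2 * b * x + c) / y) / y ^ 2 =
      exp (-(a * y + (a * c - b ^ 2) / a / y)) / y ^ 2 * exp (-(a / y * (x + b / a) ^ 2)) := by
  rw [div_mul_eq_mul_div, ← exp_add]
  congr 2
  field_simp
  ring

lemma integrable_exp_neg_quadratic_div (ha : 0 < a) (hy : 0 < y) :
    Integrable fun x => exp (-(a * (x ^ 2 + y ^ 2) + 2 * b * x + c) / y) / y ^ 2 := by
  simp_rw [exp_neg_quadratic_div_eq ha.ne' hy.ne']
  simpa [neg_mul] using
    ((integrable_exp_neg_mul_sq (div_pos ha hy)).comp_add_right (b / a)).const_mul _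

lemma integral_exp_neg_quadratic_div (ha : 0 < a) (hy : 0 < y) :
    ∫ x, exp (-(a * (x ^ 2 + y ^ 2) + 2 * b * x + c) / y) / y ^ 2 =
      √π / √a * (exp (-(a * y + (a * c - b ^ 2) / a / y)) / (y * √y)) := by
  simp_rw [exp_neg_quadratic_div_eq ha.ne' hy.ne']
  rw [integral_const_mul, integral_exp_neg_mul_add_sq, div_div_eq_mul_div,
    sqrt_div' _ ha.le, sqrt_mul pi_nonneg]
  have : 0 < √y := sqrt_pos.2 hy
  have : 0 < √a := sqrt_pos.2 ha
  field_simp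
  rw [sq_sqrt hy.le]

lemma setIntegral_exp_neg_quadratic_div (ha : 0 < a) (hD : 0 < a * c - b ^ 2) :
    ∫ z in {w : ℝ × ℝ | 0 < w.2},
        exp (-(a * (z.1 ^ 2 + z.2 ^ 2) + 2 * b * z.1 + c) / z.2) / z.2 ^ 2 =
      π / √(a * c - b ^ 2) * exp (-(2 * √(a * c - b ^ 2))) := by
  set f : ℝ × ℝ → ℝ := fun z => exp (-(a * (z.1 ^ 2 + z.2 ^ 2) + 2 * b * z.1 + c) / z.2) / z.2 ^ 2
  have hd : 0 < (a * c - b ^ 2) / a := div_pos hD ha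
  have hμ : volume.restrict {w : ℝ × ℝ | 0 < w.2} = volume.prod (volume.restrict (Ioi 0)) := by
    rw [show {w : ℝ × ℝ | 0 < w.2} = univ ×ˢ Ioi 0 by ext; simp, Measure.volume_eq_prod,
      ← Measure.prod_restrict, Measure.restrict_univ]
  have hf : Integrable f (volume.prod (volume.restrict (Ioi 0))) := by
    rw [integrable_prod_iff' (by fun_prop : Measurable f).aestronglyMeasurable]
    refine ⟨?_, ?_⟩
    · filter_upwards [ae_restrict_mem measurableSet_Ioi] with y hy
      exact integrable_exp_neg_quadratic_div ha hy
    · refine ((integrableOn_exp_neg_mul_add_div_div_mul_sqrt ha hd).const_mul (√π / √a)).congr ?_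
      filter_upwards [ae_restrict_mem measurableSet_Ioi] with y (hy : 0 < y)
      have hnorm : ∀ x, ‖f (x, y)‖ = f (x, y) := fun x => norm_of_nonneg (by positivity)
      simp only [hnorm]
      exact (integral_exp_neg_quadratic_div ha hy).symm
  rw [hμ, integral_prod_symm f hf, setIntegral_congr_fun measurableSet_Ioi
    fun y hy => integral_exp_neg_quadratic_div ha hy, integral_const_mul,
    integral_exp_neg_mul_add_div_div_mul_sqrt ha hd, mul_div_cancel₀ _ ha.ne']
  calc √π / √a * (√π / √((a * c - b ^ 2) / a) * exp (-(2 * √(a * c - b ^ 2))))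
      = (√π * √π) / (√a * √((a * c - b ^ 2) / a)) * exp (-(2 * √(a * c - b ^ 2))) := by ring
    _ = π / √(a * c - b ^ 2) * exp (-(2 * √(a * c - b ^ 2))) := by
      rw [mul_self_sqrt pi_nonneg, ← sqrt_mul ha.le, mul_div_cancel₀ _ ha.ne']

end UpperHalfPlane

section PoincareDistribution

variable {θ θ' : Matrix (Fin 2) (Fin 2) ℝ} {z : ℝ × ℝ}

noncomputable def poincareKernel (θ : Matrix (Fin 2) (Fin 2) ℝ) (z : ℝ × ℝ) : ℝ :=
  exp (-(θ 0 0 * (z.1 ^ 2 + z.2 ^ 2) + 2 * θ 0 1 * z.1 + θ 1 1) / z.2) / z.2 ^ 2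

noncomputable def poincareNormalizer (θ : Matrix (Fin 2) (Fin 2) ℝ) : ℝ :=
  √θ.det * exp (2 * √θ.det) / π

lemma poincareNormalizer_nonneg : 0 ≤ poincareNormalizer θ := by
  unfold poincareNormalizer
  positivity

lemma poincareNormalizer_pos (hθ : 0 < θ.det) : 0 < poincareNormalizer θ := by
  unfold poincareNormalizer
  have := sqrt_pos.2 hθ
  positivity

lemma poincareKernel_nonneg : 0 ≤ poincareKernel θ z := by
  unfold poincareKernel
  positivity

lemma log_poincareNormalizer (hθ : 0 < θ.det) :
    log (poincareNormalizer θ) = log θ.det / 2 + 2 * √θ.det - log π := by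
  rw [poincareNormalizer, log_div (by positivity) pi_ne_zero,
    log_mul (sqrt_pos.2 hθ).ne' (exp_pos _).ne', log_exp, log_sqrt hθ.le]

lemma poincareDensity_of_pos (hz : 0 < z.2) :
    poincareDensity θ z = poincareNormalizer θ * poincareKernel θ z := by
  rw [poincareDensity, if_pos hz, poincareNormalizer, poincareKernel, mul_div_assoc]

lemma poincareKernel_rpow_mul_rpow (hz : 0 < z.2) (α : ℝ) :
    poincareKernel θ z ^ α * poincareKernel θ' z ^ (1 - α) =
      poincareKernel (α • θ + (1 - α) • θ') z := by
  have hz2 : 0 < z.2 ^ 2 := by positivity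
  simp only [poincareKernel, div_rpow (exp_pos _).le hz2.le, ← exp_mul]
  rw [div_mul_div_comm, ← rpow_add hz2, add_sub_cancel, rpow_one, ← exp_add]
  congr 2
  simp only [Matrix.add_apply, Matrix.smul_apply, smul_eq_mul]
  field_simp
  ring

lemma setIntegral_poincareKernel (hθ : θ.PosDef) :
    ∫ z in {w : ℝ × ℝ | 0 < w.2}, poincareKernel θ z = (poincareNormalizer θ)⁻¹ := by
  have hdet : θ.det = θ 0 0 * θ 1 1 - θ 0 1 ^ 2 := by
    rw [det_fin_two, ← hθ.isHermitian.apply 0 1]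
    simp only [star_trivial]
    ring
  have hdet_pos : 0 < θ 0 0 * θ 1 1 - θ 0 1 ^ 2 := hdet ▸ hθ.det_pos
  simp only [poincareKernel]
  rw [setIntegral_exp_neg_quadratic_div hθ.diag_pos hdet_pos, ← hdet, poincareNormalizer, inv_div,
    exp_neg]
  field_simp

lemma setIntegral_poincareDensity_rpow_mul_rpow (α : ℝ) (hmix : (α • θ + (1 - α) • θ').PosDef) :
    ∫ z in {w : ℝ × ℝ | 0 < w.2}, poincareDensity θ z ^ α * poincareDensity θ' z ^ (1 - α) =
      poincareNormalizer θ ^ α * poincareNormalizer θ' ^ (1 - α) /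
        poincareNormalizer (α • θ + (1 - α) • θ') := by
  rw [div_eq_mul_inv, ← setIntegral_poincareKernel hmix, ← integral_const_mul]
  refine setIntegral_congr_fun (measurableSet_lt measurable_const measurable_snd)
    fun z (hz : 0 < z.2) => ?_
  rw [poincareDensity_of_pos hz, poincareDensity_of_pos hz,
    mul_rpow poincareNormalizer_nonneg poincareKernel_nonneg,
    mul_rpow poincareNormalizer_nonneg poincareKernel_nonneg,
    ← poincareKernel_rpow_mul_rpow hz]
  ring

end PoincareDistribution

/-- closed form of the α-Bhattacharyya divergence between two
Poincaré distributions, for α ∈ (0,1). -/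
theorem bhattacharyya_poincare (α : ℝ) (hα : α ∈ Set.Ioo (0 : ℝ) 1)
    (θ θ' : Matrix (Fin 2) (Fin 2) ℝ) (hθ : θ.PosDef) (hθ' : θ'.PosDef) :
    -Real.log (∫ z in {w : ℝ × ℝ | 0 < w.2},
        poincareDensity θ z ^ α * poincareDensity θ' z ^ (1 - α)) =
      1 / 2 * Real.log ((α • θ + (1 - α) • θ').det / (θ.det ^ α * θ'.det ^ (1 - α))) +
        2 * (Real.sqrt (α • θ + (1 - α) • θ').det -
          (α * Real.sqrt θ.det + (1 - α) * Real.sqrt θ'.det)) := by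
  obtain ⟨hα₀, hα₁⟩ := hα
  have hmix : (α • θ + (1 - α) • θ').PosDef := (hθ.smul hα₀).add (hθ'.smul (sub_pos.2 hα₁))
  have hdet := hθ.det_pos
  have hdet' := hθ'.det_pos
  have hdet_mix := hmix.det_pos
  have hN := poincareNormalizer_pos hdet
  have hN' := poincareNormalizer_pos hdet'
  have hN_mix := poincareNormalizer_pos hdet_mix
  rw [setIntegral_poincareDensity_rpow_mul_rpow α hmix, log_div (by positivity) hN_mix.ne',
    log_mul (by positivity) (by positivity), log_rpow hN, log_rpow hN',
    log_poincareNormalizer hdet, log_poincareNormalizer hdet', log_poincareNormalizer hdet_mix,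
    log_div hdet_mix.ne' (by positivity), log_mul (by positivity) (by positivity),
    log_rpow hdet, log_rpow hdet']
  ring
end
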